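/- If a = c b c* for some contraction c ∈ Mₙ(ℂ) and positive semidefinite b, then φ_α(a) ≤ φ_α(b) for every Choquet-type trace φ_α associated with a monotone increasing α : {0,...,n} → [0,∞) with α(0)=0. -/

import Mathlib

/-!
By Abel summation, `φ_α(x) = ∑ᵢ λᵢ₊₁(x) (α(i+1) - α(i))` once `α(0) = 0`, a combination of the
eigenvalues with nonnegative weights, so it suffices that `λₖ(c b c*) ≤ λₖ(b)` for every `k`.
This is a Courant–Fischer argument: the span of the top `k` eigenvectors of `a = c b c*` and the
preimage under `c*` of the span of the bottom `n - k + 1` eigenvectors of `b` meet in some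
`v ≠ 0`, and then
`λₖ(a) ‖v‖² ≤ ⟪v, a v⟫ = ⟪c* v, b c* v⟫ ≤ λₖ(b) ‖c* v‖² ≤ λₖ(b) ‖v‖²`,
the last step because `λₖ(b) ≥ 0` and `‖c‖ ≤ 1`.
-/

open Matrix BigOperators Finset
open scoped ComplexOrder

/-- The `i`-th largest eigenvalue (0-indexed) of a Hermitian matrix. -/
noncomputable def eigDesc {n : ℕ} (a : Matrix (Fin n) (Fin n) ℂ) (ha : a.IsHermitian) (i : Fin n) : ℝ :=
  ha.eigenvalues (Tuple.sort ha.eigenvalues i.rev)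

/-- Eigenvalues in decreasing order, extended by `0` beyond the size. `eigN a ha i = λ_{i+1}(a)`. -/
noncomputable def eigN {n : ℕ} (a : Matrix (Fin n) (Fin n) ℂ) (ha : a.IsHermitian) (i : ℕ) : ℝ :=
  if h : i < n then eigDesc a ha ⟨i, h⟩ else 0

/-- The non-linear trace of Choquet type:
`φ_α(a) = ∑_{i=1}^{n-1} (λ_i(a) - λ_{i+1}(a)) α(i) + λ_n(a) α(n)`. -/
noncomputable def choquetTrace {n : ℕ} (α : ℕ → ℝ) (a : Matrix (Fin n) (Fin n) ℂ)
    (ha : a.IsHermitian) : ℝ :=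
  ∑ i ∈ Finset.range n, (eigN a ha i - eigN a ha (i + 1)) * α (i + 1)

/-- Functional calculus of a Hermitian matrix `a` by a function `f : ℝ → ℝ` on its eigenvalues. -/
noncomputable def funCalc {n : ℕ} (f : ℝ → ℝ) (a : Matrix (Fin n) (Fin n) ℂ)
    (ha : a.IsHermitian) : Matrix (Fin n) (Fin n) ℂ :=
  (ha.eigenvectorUnitary : Matrix (Fin n) (Fin n) ℂ) *
    Matrix.diagonal (fun i => (f (ha.eigenvalues i) : ℂ)) *
    star (ha.eigenvectorUnitary : Matrix (Fin n) (Fin n) ℂ)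

/-- The absolute value `|a| = (a^* a)^{1/2}` of a matrix. -/
noncomputable def matAbs {n : ℕ} (a : Matrix (Fin n) (Fin n) ℂ) : Matrix (Fin n) (Fin n) ℂ :=
  ((Matrix.posSemidef_conjTranspose_mul_self a).1.eigenvectorUnitary : Matrix (Fin n) (Fin n) ℂ) *
    Matrix.diagonal ((↑) ∘ (√·) ∘ (Matrix.posSemidef_conjTranspose_mul_self a).1.eigenvalues) *
    (star (Matrix.posSemidef_conjTranspose_mul_self a).1.eigenvectorUnitary : Matrix (Fin n) (Fin n) ℂ)

theorem matAbs_isHermitian {n : ℕ} (a : Matrix (Fin n) (Fin n) ℂ) : (matAbs a).IsHermitian :=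
  isHermitian_mul_mul_conjTranspose _ (isHermitian_diagonal_of_self_adjoint _ (by ext i; simp))

open scoped InnerProductSpace

namespace OrthonormalBasis

variable {𝕜 E ι : Type*} [RCLike 𝕜] [NormedAddCommGroup E] [InnerProductSpace 𝕜 E] [Fintype ι]
  {T : E →ₗ[𝕜] E} (e : OrthonormalBasis ι 𝕜 E) {μ : ι → ℝ}

lemma re_inner_apply_eq_sum (hT : T.IsSymmetric) (he : ∀ j, T (e j) = (μ j : 𝕜) • e j) (v : E) :
    RCLike.re ⟪v, T v⟫_𝕜 = ∑ j, μ j * ‖⟪e j, v⟫_𝕜‖ ^ 2 := by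
  rw [← e.sum_inner_mul_inner v (T v), map_sum]
  refine Finset.sum_congr rfl fun j _ => ?_
  rw [← hT, he, inner_smul_left, RCLike.conj_ofReal, ← inner_conj_symm v (e j), mul_left_comm,
    RCLike.conj_mul, ← RCLike.ofReal_pow, ← RCLike.ofReal_mul, RCLike.ofReal_re]

lemma mul_norm_sq_le_re_inner_apply (hT : T.IsSymmetric) (he : ∀ j, T (e j) = (μ j : 𝕜) • e j)
    {v : E} {t : ℝ} (ht : ∀ j, ⟪e j, v⟫_𝕜 ≠ 0 → t ≤ μ j) :
    t * ‖v‖ ^ 2 ≤ RCLike.re ⟪v, T v⟫_𝕜 := by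
  rw [e.re_inner_apply_eq_sum hT he, ← e.sum_sq_norm_inner_right v, mul_sum]
  refine sum_le_sum fun j _ => ?_
  by_cases hj : ⟪e j, v⟫_𝕜 = 0
  · simp [hj]
  · exact mul_le_mul_of_nonneg_right (ht j hj) (by positivity)

lemma re_inner_apply_le_mul_norm_sq (hT : T.IsSymmetric) (he : ∀ j, T (e j) = (μ j : 𝕜) • e j)
    {v : E} {t : ℝ} (ht : ∀ j, ⟪e j, v⟫_𝕜 ≠ 0 → μ j ≤ t) :
    RCLike.re ⟪v, T v⟫_𝕜 ≤ t * ‖v‖ ^ 2 := by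
  rw [e.re_inner_apply_eq_sum hT he, ← e.sum_sq_norm_inner_right v, mul_sum]
  refine sum_le_sum fun j _ => ?_
  by_cases hj : ⟪e j, v⟫_𝕜 = 0
  · simp [hj]
  · exact mul_le_mul_of_nonneg_right (ht j hj) (by positivity)

end OrthonormalBasis

section KernelCount

variable {𝕜 E F ι κ : Type*} [RCLike 𝕜] [NormedAddCommGroup E] [InnerProductSpace 𝕜 E]
  [FiniteDimensional 𝕜 E] [NormedAddCommGroup F] [InnerProductSpace 𝕜 F]
  [Fintype ι] [Fintype κ] [DecidableEq ι] [DecidableEq κ]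

lemma exists_ne_zero_inner_eq_zero_of_card_compl_lt (e : ι → E) (f : κ → F) (C : E →ₗ[𝕜] F)
    {S : Finset ι} {T : Finset κ} (h : #Sᶜ + #Tᶜ < Module.finrank 𝕜 E) :
    ∃ v ≠ 0, (∀ j ∉ S, ⟪e j, v⟫_𝕜 = 0) ∧ ∀ k ∉ T, ⟪f k, C v⟫_𝕜 = 0 := by
  let L : E →ₗ[𝕜] (↥Sᶜ → 𝕜) × (↥Tᶜ → 𝕜) :=
    (LinearMap.pi fun j : ↥Sᶜ => innerₛₗ 𝕜 (e j)).prod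
      (LinearMap.pi fun k : ↥Tᶜ => innerₛₗ 𝕜 (f k) ∘ₗ C)
  have hker : LinearMap.ker L ≠ ⊥ :=
    LinearMap.ker_ne_bot_of_finrank_lt (by simpa [card_compl] using h)
  obtain ⟨v, hv, hv0⟩ := (Submodule.ne_bot_iff _).mp hker
  refine ⟨v, hv0, fun j hj => ?_, fun k hk => ?_⟩
  · exact congrFun (congrArg Prod.fst hv) ⟨j, mem_compl.2 hj⟩
  · exact congrFun (congrArg Prod.snd hv) ⟨k, mem_compl.2 hk⟩

end KernelCount

namespace Tuple

variable {n : ℕ} {α : Type*} [LinearOrder α] (f : Fin n → α) (k : Fin n)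

lemma card_sub_le_card_filter_sort_le : n - k ≤ #{j | f (sort f k) ≤ f j} := by
  calc n - k = #((Ici k).map (sort f).toEmbedding) := by simp
    _ ≤ _ := card_le_card fun j hj => by
      obtain ⟨i, hi, rfl⟩ := mem_map.1 hj
      simpa using monotone_sort f (mem_Ici.1 hi)

lemma succ_le_card_filter_le_sort : k + 1 ≤ #{j | f j ≤ f (sort f k)} := by
  calc k + 1 = #((Iic k).map (sort f).toEmbedding) := by simp
    _ ≤ _ := card_le_card fun j hj => by
      obtain ⟨i, hi, rfl⟩ := mem_map.1 hj
      simpa using monotone_sort f (mem_Iic.1 hi)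

end Tuple

namespace Matrix

variable {𝕜 ι : Type*} [RCLike 𝕜] [Fintype ι] [DecidableEq ι] {x : Matrix ι ι 𝕜}

lemma IsHermitian.toEuclideanCLM_eigenvectorBasis (hx : x.IsHermitian) (j : ι) :
    toEuclideanCLM (𝕜 := 𝕜) x (hx.eigenvectorBasis j) =
      (hx.eigenvalues j : 𝕜) • hx.eigenvectorBasis j := by
  ext i
  simpa using congrFun (hx.mulVec_eigenvectorBasis j) i

lemma IsHermitian.isSymmetric_toEuclideanCLM (hx : x.IsHermitian) :
    (toEuclideanCLM (𝕜 := 𝕜) x : EuclideanSpace 𝕜 ι →ₗ[𝕜] EuclideanSpace 𝕜 ι).IsSymmetric :=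
  isSymmetric_toEuclideanLin_iff.mpr hx

end Matrix

lemma ContinuousLinearMap.norm_adjoint_apply_le {𝕜 E F : Type*} [RCLike 𝕜]
    [NormedAddCommGroup E] [InnerProductSpace 𝕜 E] [CompleteSpace E]
    [NormedAddCommGroup F] [InnerProductSpace 𝕜 F] [CompleteSpace F]
    {C : E →L[𝕜] F} (hC : ‖C‖ ≤ 1) (v : F) : ‖adjoint C v‖ ≤ ‖v‖ := by
  calc ‖adjoint C v‖ ≤ ‖adjoint C‖ * ‖v‖ := (adjoint C).le_opNorm v
    _ ≤ ‖v‖ := by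
      rw [LinearIsometryEquiv.norm_map]
      exact mul_le_of_le_one_left (norm_nonneg v) hC

theorem eigDesc_le_of_eq_mul_mul_star {n : ℕ} {a b c : Matrix (Fin n) (Fin n) ℂ}
    (ha : a.IsHermitian) (hb : b.PosSemidef) (hc : ‖toEuclideanCLM (𝕜 := ℂ) c‖ ≤ 1)
    (habc : a = c * b * star c) (i : Fin n) : eigDesc a ha i ≤ eigDesc b hb.1 i := by
  set s := eigDesc a ha i
  set t := eigDesc b hb.1 i
  set C := toEuclideanCLM (𝕜 := ℂ) c
  have hS : n - i.rev ≤ #{j | s ≤ ha.eigenvalues j} :=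
    Tuple.card_sub_le_card_filter_sort_le ha.eigenvalues i.rev
  have hT : i.rev + 1 ≤ #{j | hb.1.eigenvalues j ≤ t} :=
    Tuple.succ_le_card_filter_le_sort hb.1.eigenvalues i.rev
  obtain ⟨v, hv0, hva, hvb⟩ := exists_ne_zero_inner_eq_zero_of_card_compl_lt
    ha.eigenvectorBasis hb.1.eigenvectorBasis (ContinuousLinearMap.adjoint C : _ →ₗ[ℂ] _)
    (S := {j | s ≤ ha.eigenvalues j}) (T := {j | hb.1.eigenvalues j ≤ t}) (by
      rw [card_compl, card_compl, finrank_euclideanSpace_fin, Fintype.card_fin]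
      have := i.is_lt
      simp only [Fin.val_rev] at hS hT
      omega)
  have hlow : s * ‖v‖ ^ 2 ≤ RCLike.re ⟪v, toEuclideanCLM (𝕜 := ℂ) a v⟫_ℂ :=
    ha.eigenvectorBasis.mul_norm_sq_le_re_inner_apply ha.isSymmetric_toEuclideanCLM
      ha.toEuclideanCLM_eigenvectorBasis fun j hj => by
        by_contra h
        exact hj (hva j (by simpa using h))
  set w := ContinuousLinearMap.adjoint C v
  have hup : RCLike.re ⟪w, toEuclideanCLM (𝕜 := ℂ) b w⟫_ℂ ≤ t * ‖w‖ ^ 2 :=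
    hb.1.eigenvectorBasis.re_inner_apply_le_mul_norm_sq hb.1.isSymmetric_toEuclideanCLM
      hb.1.toEuclideanCLM_eigenvectorBasis fun j hj => by
        by_contra h
        exact hj (hvb j (by simpa using h))
  have hform : ⟪v, toEuclideanCLM (𝕜 := ℂ) a v⟫_ℂ = ⟪w, toEuclideanCLM (𝕜 := ℂ) b w⟫_ℂ := by
    rw [habc, map_mul, map_mul, map_star, ContinuousLinearMap.star_eq_adjoint,
      mul_apply_eq_comp, mul_apply_eq_comp, ContinuousLinearMap.adjoint_inner_left]
  have hw : t * ‖w‖ ^ 2 ≤ t * ‖v‖ ^ 2 :=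
    mul_le_mul_of_nonneg_left (pow_le_pow_left₀ (norm_nonneg w)
      (ContinuousLinearMap.norm_adjoint_apply_le hc v) 2) (hb.eigenvalues_nonneg _)
  refine le_of_mul_le_mul_right ?_ (by positivity : (0 : ℝ) < ‖v‖ ^ 2)
  calc s * ‖v‖ ^ 2 ≤ RCLike.re ⟪v, toEuclideanCLM (𝕜 := ℂ) a v⟫_ℂ := hlow
    _ = RCLike.re ⟪w, toEuclideanCLM (𝕜 := ℂ) b w⟫_ℂ := by rw [hform]
    _ ≤ t * ‖w‖ ^ 2 := hup
    _ ≤ t * ‖v‖ ^ 2 := hw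

lemma Finset.sum_range_sub_mul_eq {R : Type*} [CommRing R] (e g : ℕ → R) (n : ℕ) :
    ∑ i ∈ range n, (e i - e (i + 1)) * g (i + 1) =
      ∑ i ∈ range n, e i * (g (i + 1) - g i) + e 0 * g 0 - e n * g n := by
  induction n with
  | zero => simp
  | succ m ih => rw [sum_range_succ, sum_range_succ, ih]; ring

lemma choquetTrace_eq_sum_eigN_mul {n : ℕ} {α : ℕ → ℝ} (hα0 : α 0 = 0)
    (x : Matrix (Fin n) (Fin n) ℂ) (hx : x.IsHermitian) :
    choquetTrace α x hx = ∑ i ∈ range n, eigN x hx i * (α (i + 1) - α i) := by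
  have hn : eigN x hx n = 0 := dif_neg n.lt_irrefl
  rw [choquetTrace, sum_range_sub_mul_eq, hα0, hn]
  ring

lemma eigN_le_of_eq_mul_mul_star {n : ℕ} {a b c : Matrix (Fin n) (Fin n) ℂ}
    (ha : a.IsHermitian) (hb : b.PosSemidef) (hc : ‖toEuclideanCLM (𝕜 := ℂ) c‖ ≤ 1)
    (habc : a = c * b * star c) (i : ℕ) : eigN a ha i ≤ eigN b hb.1 i := by
  unfold eigN
  split_ifs with hi
  · exact eigDesc_le_of_eq_mul_mul_star ha hb hc habc ⟨i, hi⟩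
  · rfl

/-- if `a = c b c^*` with `c` a contraction, then `φ_α(a) ≤ φ_α(b)`. -/
theorem stmt7 (n : ℕ) (α : ℕ → ℝ) (hα0 : α 0 = 0)
    (hmono : ∀ i j : ℕ, i ≤ j → j ≤ n → α i ≤ α j)
    (a b c : Matrix (Fin n) (Fin n) ℂ) (ha : a.PosSemidef) (hb : b.PosSemidef)
    (hc : ‖Matrix.toEuclideanCLM (𝕜 := ℂ) c‖ ≤ 1) (habc : a = c * b * star c) :
    choquetTrace α a ha.1 ≤ choquetTrace α b hb.1 := by
  rw [choquetTrace_eq_sum_eigN_mul hα0, choquetTrace_eq_sum_eigN_mul hα0]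
  gcongr with i hi
  · exact sub_nonneg.2 (hmono i (i + 1) i.le_succ (mem_range.1 hi))
  · exact eigN_le_of_eq_mul_mul_star ha.1 hb hc habc i
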